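/- arXiv:1008.4533 — 2 statements merged into one kernel-verified Lean document; each statement's English description precedes it below -/
import Mathlib

section
/- P_{n,2r} and Q_{n,2r} are dual cones with respect to the inner product [·,·]: a form q ∈ F_{n,2r} satisfies [p,q] ≥ 0 for every p ∈ Q_{n,2r} if and only if q ∈ P_{n,2r}; and a form p ∈ F_{n,2r} satisfies [p,q] ≥ 0 for every q ∈ P_{n,2r} if and only if p ∈ Q_{n,2r}. -/
open MvPolynomial Filter

/-- Composition of a form with a matrix: `(p ∘ M)(x) = p (M x)`. -/
noncomputable def compMat {n : ℕ} (p : MvPolynomial (Fin n) ℝ)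
    (M : Matrix (Fin n) (Fin n) ℝ) : MvPolynomial (Fin n) ℝ :=
  aeval (fun j => ∑ k, MvPolynomial.C (M j k) * X k) p

/-- Coefficientwise convergence of a sequence of polynomials. -/
def CoeffTendsto {n : ℕ} (f : ℕ → MvPolynomial (Fin n) ℝ)
    (q : MvPolynomial (Fin n) ℝ) : Prop :=
  ∀ i : Fin n →₀ ℕ, Tendsto (fun m => (f m).coeff i) atTop (nhds (q.coeff i))

/-- A blender: a closed convex cone of degree-`d` forms closed under linear changes of variables. -/
def IsBlender (n d : ℕ) (B : Set (MvPolynomial (Fin n) ℝ)) : Prop :=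
  (∀ p ∈ B, p.IsHomogeneous d) ∧
  (0 ∈ B) ∧
  (∀ p ∈ B, ∀ q ∈ B, p + q ∈ B) ∧
  (∀ (f : ℕ → MvPolynomial (Fin n) ℝ) (q : MvPolynomial (Fin n) ℝ),
      (∀ m, f m ∈ B) → CoeffTendsto f q → q ∈ B) ∧
  (∀ p ∈ B, ∀ M : Matrix (Fin n) (Fin n) ℝ, compMat p M ∈ B)

/-- The inner product `[p,q] = Σ_i c(i) a(p;i) a(q;i)`, where the coefficient of `x^i`
is `c(i) a(p;i)` and `c(i)` is the multinomial coefficient. -/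
noncomputable def formInner {n : ℕ} (p q : MvPolynomial (Fin n) ℝ) : ℝ :=
  ∑ i ∈ p.support ∪ q.support,
    p.coeff i * q.coeff i / (Nat.multinomial Finset.univ (fun j => i j) : ℝ)

/-- The cone of psd forms of degree `d`. -/
def Psd (n d : ℕ) : Set (MvPolynomial (Fin n) ℝ) :=
  {p | p.IsHomogeneous d ∧ ∀ u : Fin n → ℝ, 0 ≤ eval u p}

/-- The linear form with coefficients `a`. -/
noncomputable def linForm {n : ℕ} (a : Fin n → ℝ) : MvPolynomial (Fin n) ℝ :=
  ∑ j, MvPolynomial.C (a j) * X j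

/-- The cone `Q_{n,d}` of sums of `d`-th powers of real linear forms. -/
def SumPow (n d : ℕ) : Set (MvPolynomial (Fin n) ℝ) :=
  {p | ∃ (s : ℕ) (a : Fin s → Fin n → ℝ), p = ∑ k, (linForm (a k)) ^ d}

/-!
The coefficient of `x^i` in `(a · x)^d` is `c(i) a^i`, so `[(a · x)^d, q] = q(a)` for every form
`q` of degree `d`. This gives the first duality and the easy half of the second. For the other
half, `Q_{n,d}` is a closed convex cone in the finite-dimensional space of coefficient vectors:
by Carathéodory's theorem it is the image of `(a_1, …, a_N) ↦ Σ (a_k · x)^d` for a fixed `N`,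
a positively homogeneous map which for even `d` vanishes only at the origin, hence is proper.
A form `p ∉ Q_{n,d}` is therefore separated from `Q_{n,d}` by a linear functional; it is `[·, q]`
for a form `q` with `q(a) = [(a · x)^d, q] ≥ 0`, i.e. a psd `q` with `[p, q] < 0`.
-/

open Set Finset Module

section HomogeneousMap

variable {E F : Type*} [NormedAddCommGroup E] [NormedSpace ℝ E] [ProperSpace E]
  [NormedAddCommGroup F] [NormedSpace ℝ F] {Φ : E → F} {d : ℕ}

theorem exists_pos_mul_norm_pow_le_norm_of_homogeneous [Nontrivial E] (hd : d ≠ 0)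
    (hcont : Continuous Φ) (hhom : ∀ t : ℝ, 0 ≤ t → ∀ x, Φ (t • x) = t ^ d • Φ x)
    (hΦ : ∀ x, Φ x = 0 → x = 0) :
    ∃ m > 0, ∀ x, m * ‖x‖ ^ d ≤ ‖Φ x‖ := by
  obtain ⟨x₀, hx₀, hmin⟩ := (isCompact_sphere (0 : E) 1).exists_isMinOn
    (NormedSpace.sphere_nonempty.mpr zero_le_one) hcont.norm.continuousOn
  have hx₀ne : x₀ ≠ 0 := ne_zero_of_mem_unit_sphere ⟨x₀, hx₀⟩
  refine ⟨‖Φ x₀‖, norm_pos_iff.mpr fun h => hx₀ne (hΦ _ h), fun x => ?_⟩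
  rcases eq_or_ne x 0 with rfl | hx
  · simp [zero_pow hd]
  have hu : ‖x‖⁻¹ • x ∈ Metric.sphere (0 : E) 1 := by
    rw [mem_sphere_zero_iff_norm]; exact norm_smul_inv_norm hx
  calc ‖Φ x₀‖ * ‖x‖ ^ d ≤ ‖Φ (‖x‖⁻¹ • x)‖ * ‖x‖ ^ d := by gcongr; exact hmin hu
    _ = ‖‖x‖ ^ d • Φ (‖x‖⁻¹ • x)‖ := by rw [norm_smul, norm_pow, norm_norm, mul_comm]
    _ = ‖Φ x‖ := by rw [← hhom _ (norm_nonneg x), smul_inv_smul₀ (norm_ne_zero_iff.mpr hx)]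

/-- The bound `m * ‖x‖ ^ d ≤ ‖Φ x‖` makes `Φ` a proper map. -/
theorem isClosed_range_of_homogeneous [ProperSpace F] (hd : d ≠ 0)
    (hcont : Continuous Φ) (hhom : ∀ t : ℝ, 0 ≤ t → ∀ x, Φ (t • x) = t ^ d • Φ x)
    (hΦ : ∀ x, Φ x = 0 → x = 0) : IsClosed (range Φ) := by
  cases subsingleton_or_nontrivial E
  · exact (finite_range Φ).isClosed
  obtain ⟨m, hm, hbound⟩ := exists_pos_mul_norm_pow_le_norm_of_homogeneous hd hcont hhom hΦ
  refine (isProperMap_iff_tendsto_cocompact.mpr ⟨hcont, ?_⟩).isClosed_range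
  rw [← Metric.cobounded_eq_cocompact, ← Metric.cobounded_eq_cocompact,
    ← tendsto_norm_atTop_iff_cobounded]
  exact tendsto_atTop_mono hbound
    (((tendsto_pow_atTop hd).comp tendsto_norm_cobounded_atTop).const_mul_atTop hm)

end HomogeneousMap

section ConicCaratheodory

variable {ι X V : Type*} [AddCommGroup V] [Module ℝ V]

theorem exists_nonneg_weights_sum_smul_eq_sum [FiniteDimensional ℝ V] [Fintype ι] {v : ι → V}
    (hcard : finrank ℝ V < Fintype.card ι) :
    ∃ c : ι → ℝ, (∀ i, 0 ≤ c i) ∧ (∃ i, c i = 0) ∧ ∑ i, c i • v i = ∑ i, v i := by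
  have hdep : ¬ LinearIndependent ℝ v := fun h => hcard.not_ge h.fintype_card_le_finrank
  obtain ⟨g, hg, i₀, hi₀⟩ := Fintype.not_linearIndependent_iff.mp hdep
  obtain ⟨g, hg, i₀, hi₀⟩ : ∃ g : ι → ℝ, ∑ i, g i • v i = 0 ∧ ∃ i, 0 < g i := by
    rcases hi₀.lt_or_gt with hneg | hpos
    · exact ⟨-g, by simp [hg], i₀, by simpa using hneg⟩
    · exact ⟨g, hg, i₀, hpos⟩
  have : Nonempty ι := ⟨i₀⟩
  obtain ⟨k, hk⟩ := Finite.exists_max g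
  have hgk : 0 < g k := hi₀.trans_le (hk i₀)
  refine ⟨fun i => 1 - g i / g k, fun i => ?_, ⟨k, by simp [hgk.ne']⟩, ?_⟩
  · simpa using div_le_one_of_le₀ (hk i) hgk.le
  · simp_rw [sub_smul, one_smul, Finset.sum_sub_distrib, div_eq_inv_mul, mul_smul,
      ← Finset.smul_sum, hg, smul_zero, sub_zero]

variable {L : X → V}

/-- Carathéodory's theorem for cones. -/
theorem exists_fin_finrank_sum_eq [FiniteDimensional ℝ V]
    (hL : ∀ x, ∀ c : ℝ, 0 ≤ c → ∃ y, L y = c • L x) {x₀ : X} (hx₀ : L x₀ = 0) {s : ℕ}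
    (a : Fin s → X) : ∃ b : Fin (finrank ℝ V) → X, ∑ k, L (b k) = ∑ k, L (a k) := by
  let sums (m : ℕ) : Set V := range fun b : Fin m → X => ∑ k, L (b k)
  have grow : ∀ m, sums m ⊆ sums (m + 1) := by
    rintro m _ ⟨b, rfl⟩
    exact ⟨Fin.snoc b x₀, by simp [Fin.sum_univ_castSucc, hx₀]⟩
  have shrink : ∀ m, finrank ℝ V ≤ m → sums (m + 1) ⊆ sums m := by
    rintro m hm _ ⟨b, rfl⟩
    obtain ⟨c, hc, ⟨k, hk⟩, hsum⟩ :=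
      exists_nonneg_weights_sum_smul_eq_sum (v := fun i => L (b i))
        (by simpa using Nat.lt_succ_of_le hm)
    choose y hy using fun i => hL (b i) (c i) (hc i)
    refine ⟨y ∘ k.succAbove, ?_⟩
    dsimp only
    rw [← hsum, ← Finset.sum_congr rfl fun i _ => hy i, Fin.sum_univ_succAbove _ k, hy k, hk,
      zero_smul, zero_add]
    rfl
  suffices sums s ⊆ sums (finrank ℝ V) from this ⟨a, rfl⟩
  rcases le_total s (finrank ℝ V) with hs | hs
  · exact Nat.le_induction subset_rfl (fun m _ ih => ih.trans (grow m)) _ hs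
  · exact Nat.le_induction subset_rfl (fun m hm ih => (shrink m hm).trans ih) _ hs

theorem mem_hull_range_iff_exists_sum (hL : ∀ x, ∀ c : ℝ, 0 ≤ c → ∃ y, L y = c • L x)
    {v : V} :
    v ∈ PointedCone.hull ℝ (range L) ↔ ∃ (s : ℕ) (a : Fin s → X), ∑ k, L (a k) = v := by
  constructor
  · rw [Submodule.mem_span_set']
    rintro ⟨s, c, g, rfl⟩
    choose x hx using fun k => (g k).2
    choose y hy using fun k => hL (x k) (c k) (c k).2
    exact ⟨s, y, by simp_rw [hy, hx, Nonneg.coe_smul]⟩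
  · rintro ⟨s, a, rfl⟩
    exact Submodule.sum_mem _ fun k _ => PointedCone.subset_hull (mem_range_self (a k))

end ConicCaratheodory

section Forms

variable {n d : ℕ}

noncomputable def exponentsOfDegree (n d : ℕ) : Finset (Fin n →₀ ℕ) := univ.finsuppAntidiag d

theorem mem_exponentsOfDegree {i : Fin n →₀ ℕ} : i ∈ exponentsOfDegree n d ↔ i.degree = d := by
  simp [exponentsOfDegree, Finsupp.degree_eq_sum]

theorem support_subset_exponentsOfDegree {p : MvPolynomial (Fin n) ℝ}
    (hp : p.IsHomogeneous d) : p.support ⊆ exponentsOfDegree n d := fun i hi =>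
  mem_exponentsOfDegree.mpr (by by_contra h; exact mem_support_iff.mp hi (hp.coeff_eq_zero h))

noncomputable def coeffVec (n d : ℕ) :
    MvPolynomial (Fin n) ℝ →ₗ[ℝ] (exponentsOfDegree n d → ℝ) :=
  LinearMap.pi fun i => lcoeff ℝ i.1

@[simp] theorem coeffVec_apply (p : MvPolynomial (Fin n) ℝ) (i : exponentsOfDegree n d) :
    coeffVec n d p i = p.coeff i := rfl

theorem eq_of_coeffVec_eq {p q : MvPolynomial (Fin n) ℝ} (hp : p.IsHomogeneous d)
    (hq : q.IsHomogeneous d) (h : coeffVec n d p = coeffVec n d q) : p = q := by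
  ext i
  by_cases hi : i.degree = d
  · exact congr_fun h ⟨i, mem_exponentsOfDegree.mpr hi⟩
  · rw [hp.coeff_eq_zero hi, hq.coeff_eq_zero hi]

theorem cast_multinomial_ne_zero (i : Fin n →₀ ℕ) :
    (Nat.multinomial univ (fun j => i j) : ℝ) ≠ 0 := by
  exact_mod_cast (Nat.multinomial_pos _ _).ne'

theorem formInner_eq_sum_of_support_subset {p q : MvPolynomial (Fin n) ℝ}
    {s : Finset (Fin n →₀ ℕ)} (hs : q.support ⊆ s) :
    formInner p q = ∑ i ∈ s, p.coeff i * q.coeff i / Nat.multinomial univ (fun j => i j) := by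
  have hq : ∀ i ∉ q.support, p.coeff i * q.coeff i / Nat.multinomial univ (fun j => i j) = 0 :=
    fun i hi => by simp [notMem_support_iff.mp hi]
  rw [formInner, ← sum_subset subset_union_right fun i _ hi => hq i hi,
    sum_subset hs fun i _ hi => hq i hi]

theorem linForm_eq_sum_smul_X (a : Fin n → ℝ) : linForm a = ∑ j, a j • X j := by
  simp [linForm, smul_eq_C_mul]

theorem linForm_smul (t : ℝ) (a : Fin n → ℝ) : linForm (t • a) = C t * linForm a := by
  simp [linForm, mul_sum, mul_assoc]

theorem eval_linForm (a u : Fin n → ℝ) : eval u (linForm a) = a ⬝ᵥ u := by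
  simp [linForm, dotProduct]

theorem coeff_linForm_pow (a : Fin n → ℝ) (i : Fin n →₀ ℕ) :
    (linForm a ^ d).coeff i =
      if i.degree = d then Nat.multinomial univ (fun j => i j) * i.prod (fun j m => a j ^ m)
      else 0 := by
  rw [linForm_eq_sum_smul_X, coeff_linearCombination_X_pow_of_fintype,
    Finsupp.multinomial_eq_of_support_subset (subset_univ _)]
  rfl

theorem isHomogeneous_linForm_pow (a : Fin n → ℝ) : (linForm a ^ d).IsHomogeneous d := by
  have hlin : (linForm a).IsHomogeneous 1 :=
    IsHomogeneous.sum _ _ _ fun j _ => isHomogeneous_C_mul_X (a j) j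
  simpa using hlin.pow d

theorem isHomogeneous_sum_linForm_pow {s : ℕ} (a : Fin s → Fin n → ℝ) :
    (∑ k, linForm (a k) ^ d).IsHomogeneous d :=
  IsHomogeneous.sum _ _ _ fun k _ => isHomogeneous_linForm_pow (a k)

theorem formInner_linForm_pow {q : MvPolynomial (Fin n) ℝ} (hq : q.IsHomogeneous d)
    (a : Fin n → ℝ) : formInner (linForm a ^ d) q = eval a q := by
  rw [formInner_eq_sum_of_support_subset subset_rfl, eval_eq]
  refine sum_congr rfl fun i hi => ?_
  rw [coeff_linForm_pow,
    if_pos (mem_exponentsOfDegree.mp (support_subset_exponentsOfDegree hq hi))]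
  field_simp [cast_multinomial_ne_zero i]
  exact mul_comm _ _

theorem formInner_sum_linForm_pow {q : MvPolynomial (Fin n) ℝ} (hq : q.IsHomogeneous d)
    {s : ℕ} (a : Fin s → Fin n → ℝ) :
    formInner (∑ k, linForm (a k) ^ d) q = ∑ k, eval (a k) q := by
  simp_rw [formInner_eq_sum_of_support_subset subset_rfl, coeff_sum, sum_mul, sum_div]
  rw [sum_comm]
  exact sum_congr rfl fun k _ => by
    rw [← formInner_eq_sum_of_support_subset subset_rfl, formInner_linForm_pow hq]

theorem linForm_pow_mem_sumPow (a : Fin n → ℝ) : linForm a ^ d ∈ SumPow n d :=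
  ⟨1, fun _ => a, by simp⟩

theorem isHomogeneous_of_mem_sumPow {p : MvPolynomial (Fin n) ℝ} (hp : p ∈ SumPow n d) :
    p.IsHomogeneous d := by
  obtain ⟨s, a, rfl⟩ := hp
  exact isHomogeneous_sum_linForm_pow a

theorem formInner_nonneg_of_mem_sumPow {p q : MvPolynomial (Fin n) ℝ} (hp : p ∈ SumPow n d)
    (hq : q ∈ Psd n d) : 0 ≤ formInner p q := by
  obtain ⟨s, a, rfl⟩ := hp
  rw [formInner_sum_linForm_pow hq.1]
  exact sum_nonneg fun k _ => hq.2 (a k)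

noncomputable def dualForm (f : (exponentsOfDegree n d → ℝ) →ₗ[ℝ] ℝ) :
    MvPolynomial (Fin n) ℝ :=
  ∑ i, monomial i.1 (Nat.multinomial univ (fun j => i.1 j) * f (Pi.single i 1))

theorem isHomogeneous_dualForm (f : (exponentsOfDegree n d → ℝ) →ₗ[ℝ] ℝ) :
    (dualForm f).IsHomogeneous d :=
  IsHomogeneous.sum _ _ _ fun i _ => isHomogeneous_monomial _ (mem_exponentsOfDegree.mp i.2)

theorem coeff_dualForm (f : (exponentsOfDegree n d → ℝ) →ₗ[ℝ] ℝ) (i : exponentsOfDegree n d) :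
    (dualForm f).coeff i = Nat.multinomial univ (fun j => i.1 j) * f (Pi.single i 1) := by
  rw [dualForm, coeff_sum, sum_eq_single i (fun j _ hji => ?_) (by simp), coeff_monomial,
    if_pos rfl]
  rw [coeff_monomial, if_neg fun h => hji (Subtype.ext h)]

theorem formInner_dualForm (f : (exponentsOfDegree n d → ℝ) →ₗ[ℝ] ℝ)
    (p : MvPolynomial (Fin n) ℝ) : formInner p (dualForm f) = f (coeffVec n d p) := by
  classical
  rw [formInner_eq_sum_of_support_subset
      (support_subset_exponentsOfDegree (isHomogeneous_dualForm f)),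
    ← sum_coe_sort, f.pi_apply_eq_sum_univ]
  refine sum_congr rfl fun i _ => ?_
  rw [coeff_dualForm, coeffVec_apply, smul_eq_mul]
  field_simp [cast_multinomial_ne_zero i.1]
  congr 2
  funext j
  simp [Pi.single_apply, eq_comm]

noncomputable def powVec (n d : ℕ) (a : Fin n → ℝ) : exponentsOfDegree n d → ℝ :=
  coeffVec n d (linForm a ^ d)

theorem continuous_powVec : Continuous (powVec n d) := by
  refine continuous_pi fun i => ?_
  simp only [powVec, coeffVec_apply, coeff_linForm_pow, if_pos (mem_exponentsOfDegree.mp i.2),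
    Finsupp.prod]
  fun_prop

theorem powVec_smul (t : ℝ) (a : Fin n → ℝ) : powVec n d (t • a) = t ^ d • powVec n d a := by
  rw [powVec, powVec, linForm_smul, mul_pow, ← C_pow, ← smul_eq_C_mul, map_smul]

theorem powVec_zero (hd : d ≠ 0) : powVec n d 0 = 0 := by
  simpa [zero_pow hd] using powVec_smul (n := n) (d := d) 0 0

theorem exists_powVec_eq_smul (hd : d ≠ 0) (a : Fin n → ℝ) (c : ℝ) (hc : 0 ≤ c) :
    ∃ b, powVec n d b = c • powVec n d a :=
  ⟨c ^ (d : ℝ)⁻¹ • a, by rw [powVec_smul, Real.rpow_inv_natCast_pow hc hd]⟩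

theorem sum_powVec_eq_coeffVec {s : ℕ} (a : Fin s → Fin n → ℝ) :
    ∑ k, powVec n d (a k) = coeffVec n d (∑ k, linForm (a k) ^ d) := by
  simp [powVec, map_sum]

theorem eq_zero_of_sum_powVec_eq_zero (hd : d ≠ 0) (he : Even d) {s : ℕ}
    {b : Fin s → Fin n → ℝ} (h : ∑ k, powVec n d (b k) = 0) : b = 0 := by
  have hsum : ∑ k, linForm (b k) ^ d = 0 := by
    refine eq_of_coeffVec_eq (isHomogeneous_sum_linForm_pow b) (isHomogeneous_zero _ _ _) ?_
    rw [← sum_powVec_eq_coeffVec, h, map_zero]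
  funext k
  have hterm := (sum_eq_zero_iff_of_nonneg fun j _ => he.pow_nonneg _).mp
    (by simpa [eval_linForm] using congr_arg (eval (b k)) hsum) k (mem_univ k)
  exact dotProduct_self_eq_zero.mp ((pow_eq_zero_iff hd).mp hterm)

noncomputable def sumPowCone (n d : ℕ) : PointedCone ℝ (exponentsOfDegree n d → ℝ) :=
  PointedCone.hull ℝ (range (powVec n d))

theorem coeffVec_mem_sumPowCone_iff (hd : d ≠ 0) {p : MvPolynomial (Fin n) ℝ}
    (hp : p.IsHomogeneous d) : coeffVec n d p ∈ sumPowCone n d ↔ p ∈ SumPow n d := by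
  rw [sumPowCone, mem_hull_range_iff_exists_sum (exists_powVec_eq_smul hd)]
  refine exists_congr fun s => exists_congr fun a => ?_
  rw [sum_powVec_eq_coeffVec, eq_comm]
  exact ⟨eq_of_coeffVec_eq hp (isHomogeneous_sum_linForm_pow a), fun h => h ▸ rfl⟩

theorem sumPowCone_eq_range (hd : d ≠ 0) :
    (sumPowCone n d : Set (exponentsOfDegree n d → ℝ)) =
      range fun b : Fin (finrank ℝ (exponentsOfDegree n d → ℝ)) → Fin n → ℝ =>
        ∑ k, powVec n d (b k) := by
  ext w
  rw [SetLike.mem_coe, sumPowCone, mem_hull_range_iff_exists_sum (exists_powVec_eq_smul hd)]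
  constructor
  · rintro ⟨s, a, rfl⟩
    exact exists_fin_finrank_sum_eq (exists_powVec_eq_smul hd) (powVec_zero hd) a
  · rintro ⟨b, rfl⟩
    exact ⟨_, b, rfl⟩

theorem isClosed_sumPowCone (hd : d ≠ 0) (he : Even d) :
    IsClosed (sumPowCone n d : Set (exponentsOfDegree n d → ℝ)) := by
  rw [sumPowCone_eq_range hd]
  exact isClosed_range_of_homogeneous hd
    (continuous_finsetSum _ fun k _ => continuous_powVec.comp (continuous_apply k))
    (fun t _ b => by simp [powVec_smul, smul_sum])
    fun b => eq_zero_of_sum_powVec_eq_zero hd he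

theorem mem_sumPow_of_forall_psd (hd : d ≠ 0) (he : Even d) {p : MvPolynomial (Fin n) ℝ}
    (hp : p.IsHomogeneous d) (h : ∀ q ∈ Psd n d, 0 ≤ formInner p q) : p ∈ SumPow n d := by
  by_contra hnot
  let C : ProperCone ℝ (exponentsOfDegree n d → ℝ) :=
    { toSubmodule := sumPowCone n d, isClosed' := isClosed_sumPowCone hd he }
  obtain ⟨f, hfC, hfp⟩ := C.hyperplane_separation_point (x₀ := coeffVec n d p)
    (by rwa [← coeffVec_mem_sumPowCone_iff hd hp] at hnot)
  have hpsd : dualForm (f : (exponentsOfDegree n d → ℝ) →ₗ[ℝ] ℝ) ∈ Psd n d := by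
    refine ⟨isHomogeneous_dualForm _, fun a => ?_⟩
    rw [← formInner_linForm_pow (isHomogeneous_dualForm _), formInner_dualForm]
    exact hfC _ (PointedCone.subset_hull (mem_range_self a))
  have hpq := h _ hpsd
  rw [formInner_dualForm] at hpq
  exact (hpq.trans_lt hfp).false

end Forms

/-- `P_{n,2r}` and `Q_{n,2r}` are dual cones with respect to the inner product `[·,·]`. -/
theorem psd_sumPow_dual (n r : ℕ) (hr : 0 < r) :
    (∀ q : MvPolynomial (Fin n) ℝ,
      (q.IsHomogeneous (2 * r) ∧ ∀ p ∈ SumPow n (2 * r), 0 ≤ formInner p q) ↔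
        q ∈ Psd n (2 * r)) ∧
    (∀ p : MvPolynomial (Fin n) ℝ,
      (p.IsHomogeneous (2 * r) ∧ ∀ q ∈ Psd n (2 * r), 0 ≤ formInner p q) ↔
        p ∈ SumPow n (2 * r)) := by
  refine ⟨fun q => ⟨?_, ?_⟩, fun p => ⟨?_, ?_⟩⟩
  · rintro ⟨hq, hdual⟩
    exact ⟨hq, fun a => formInner_linForm_pow hq a ▸ hdual _ (linForm_pow_mem_sumPow a)⟩
  · exact fun hq => ⟨hq.1, fun p hp => formInner_nonneg_of_mem_sumPow hp hq⟩
  · rintro ⟨hp, hdual⟩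
    exact mem_sumPow_of_forall_psd (by omega) (even_two_mul r) hp hdual
  · exact fun hp =>
      ⟨isHomogeneous_of_mem_sumPow hp, fun q hq => formInner_nonneg_of_mem_sumPow hp hq⟩
end

section
/- If p ∈ F_{2,4} is a positive definite binary quartic form, then there exist λ ∈ (−1/3, 1/3] and an invertible 2×2 real matrix M such that p = f_λ ∘ M, where f_λ(x,y) = x⁴ + 6λx²y² + y⁴. -/
open MvPolynomial Filter

/-- The binary quartic `f_λ(x,y) = x⁴ + 6λ x²y² + y⁴`. -/
noncomputable def fQuartic (l : ℝ) : MvPolynomial (Fin 2) ℝ :=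
  X 0 ^ 4 + MvPolynomial.C (6 * l) * X 0 ^ 2 * X 1 ^ 2 + X 1 ^ 4

/-! After a shear `x ↦ x + σy` kills the `x³y` term, a positive definite quartic factors into two
real quadratic forms, because its depressed dehomogenisation `t⁴ + qt² + rt + s` factors as
`(t² + ut + v)(t² − ut + w)` with `u²` a root of the resolvent cubic. Completing the square turns
the first (definite) factor into `x² + y²`, a rotation diagonalises the second, and rescaling the
axes gives some `f_μ`. Finally `(x, y) ↦ κ(x + y, x − y)` carries `f_μ` to `f_{(1 − μ)/(1 + 3μ)}`,
which maps `μ > 1/3` into `(−1/3, 1/3)`. Invertible substitutions preserve positive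
definiteness, and that yields each sign condition along the way: the first factor is definite, the
diagonal coefficients are positive, and `μ > −1/3`. -/

open Matrix

def FormEquiv {ι : Type*} [Fintype ι] [DecidableEq ι] (Q R : (ι → ℝ) → ℝ) : Prop :=
  ∃ M : Matrix ι ι ℝ, IsUnit M ∧ ∀ u, Q u = R (M *ᵥ u)

namespace FormEquiv

variable {ι : Type*} [Fintype ι] [DecidableEq ι] {Q R S : (ι → ℝ) → ℝ}

theorem refl (Q : (ι → ℝ) → ℝ) : FormEquiv Q Q :=
  ⟨1, isUnit_one, fun u => by rw [one_mulVec]⟩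

theorem trans (h₁ : FormEquiv Q R) (h₂ : FormEquiv R S) : FormEquiv Q S := by
  obtain ⟨M, hM, hQR⟩ := h₁
  obtain ⟨N, hN, hRS⟩ := h₂
  exact ⟨N * M, hN.mul hM, fun u => by rw [hQR, hRS, mulVec_mulVec]⟩

theorem pos_of_pos (h : FormEquiv Q R) (hQ : ∀ u ≠ 0, 0 < Q u) : ∀ v ≠ 0, 0 < R v := by
  obtain ⟨M, ⟨M, rfl⟩, hQR⟩ := h
  intro v hv
  have hMv : (↑M : Matrix ι ι ℝ) *ᵥ (↑M⁻¹ *ᵥ v) = v := by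
    rw [mulVec_mulVec, Units.mul_inv, one_mulVec]
  rw [← hMv, ← hQR]
  refine hQ _ fun h0 => hv ?_
  rw [← hMv, h0, mulVec_zero]

theorem of_fin_two {Q R : (Fin 2 → ℝ) → ℝ} (a b c d : ℝ) (hdet : a * d - b * c ≠ 0)
    (h : ∀ u : Fin 2 → ℝ, Q u = R ![a * u 0 + b * u 1, c * u 0 + d * u 1]) : FormEquiv Q R := by
  refine ⟨!![a, b; c, d], ?_, fun u => ?_⟩
  · rw [isUnit_iff_isUnit_det, det_fin_two_of]
    exact hdet.isUnit
  · rw [h u]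
    congr 1
    ext i
    fin_cases i <;> simp [mulVec, dotProduct, Fin.sum_univ_two]

end FormEquiv

theorem eval_compMat {n : ℕ} (p : MvPolynomial (Fin n) ℝ) (M : Matrix (Fin n) (Fin n) ℝ)
    (u : Fin n → ℝ) : eval u (compMat p M) = eval (M *ᵥ u) p := by
  induction p using MvPolynomial.induction_on with
  | C r => simp [compMat]
  | add p q hp hq => simp only [compMat, map_add] at hp hq ⊢; rw [hp, hq]
  | mul_X p i hp =>
    simp only [compMat] at hp ⊢
    simp only [map_mul, aeval_X, hp, eval_X]
    simp [mulVec, dotProduct]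

open Finset in
theorem MvPolynomial.IsHomogeneous.eval_fin_two {p : MvPolynomial (Fin 2) ℝ} {n : ℕ}
    (hp : p.IsHomogeneous n) (u : Fin 2 → ℝ) :
    eval u p = ∑ k ∈ antidiagonal n,
      coeff (Finsupp.single 0 k.1 + Finsupp.single 1 k.2) p * u 0 ^ k.1 * u 1 ^ k.2 := by
  set mon : ℕ × ℕ → Fin 2 →₀ ℕ := fun k => Finsupp.single 0 k.1 + Finsupp.single 1 k.2
  have hmon : ∀ k, mon k 0 = k.1 ∧ mon k 1 = k.2 := fun k => by simp [mon]
  have hsupp : p.support ⊆ (antidiagonal n).image mon := by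
    intro m hm
    have hdeg : m 0 + m 1 = n := by
      simpa [Finsupp.degree_eq_weight_one, Finsupp.weight_apply, Finsupp.sum_fintype,
        Fin.sum_univ_two] using hp (mem_support_iff.mp hm)
    refine mem_image.mpr ⟨(m 0, m 1), mem_antidiagonal.mpr hdeg, ?_⟩
    ext i
    fin_cases i <;> simp [hmon]
  have hinj : Set.InjOn mon (antidiagonal n) := fun k _ k' _ h =>
    Prod.ext (by simpa [hmon] using congrArg (· 0) h) (by simpa [hmon] using congrArg (· 1) h)
  rw [eval_eq', sum_subset hsupp fun m _ hm => by simp [notMem_support_iff.mp hm],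
    sum_image hinj]
  refine sum_congr rfl fun k _ => ?_
  rw [Fin.prod_univ_two, (hmon k).1, (hmon k).2, mul_assoc]

theorem MvPolynomial.IsHomogeneous.exists_eval_eq_quartic {p : MvPolynomial (Fin 2) ℝ}
    (hp : p.IsHomogeneous 4) : ∃ a b c d e : ℝ, ∀ u : Fin 2 → ℝ, eval u p =
      a * u 0 ^ 4 + b * u 0 ^ 3 * u 1 + c * u 0 ^ 2 * u 1 ^ 2 + d * u 0 * u 1 ^ 3 + e * u 1 ^ 4 := by
  let a (i j : ℕ) : ℝ := coeff (Finsupp.single 0 i + Finsupp.single 1 j) p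
  refine ⟨a 4 0, a 3 1, a 2 2, a 1 3, a 0 4, fun u => ?_⟩
  rw [hp.eval_fin_two]
  simp only [Finset.Nat.sum_antidiagonal_succ, Finset.Nat.antidiagonal_zero, Finset.sum_singleton]
  ring

theorem eval_fQuartic (l : ℝ) (u : Fin 2 → ℝ) :
    eval u (fQuartic l) = u 0 ^ 4 + 6 * l * u 0 ^ 2 * u 1 ^ 2 + u 1 ^ 4 := by
  simp [fQuartic]

theorem exists_pos_pow_four_eq {A : ℝ} (hA : 0 < A) : ∃ t > 0, t ^ 4 = A :=
  ⟨√√A, by positivity, by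
    rw [show 4 = 2 * 2 from rfl, pow_mul, Real.sq_sqrt (Real.sqrt_nonneg _), Real.sq_sqrt hA.le]⟩

theorem sq_lt_four_mul_of_forall_ne_zero {r v : ℝ} (h : ∀ t, t ^ 2 + r * t + v ≠ 0) :
    r ^ 2 < 4 * v := by
  by_contra! hle
  have hD : discrim 1 r v = √(r ^ 2 - 4 * v) * √(r ^ 2 - 4 * v) := by
    rw [Real.mul_self_sqrt (by linarith), discrim]; ring
  obtain ⟨t, ht⟩ := exists_quadratic_eq_zero one_ne_zero ⟨_, hD⟩
  exact h t (by linear_combination ht)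

theorem exists_pos_resolvent_root (q r s : ℝ) (hr : r ≠ 0) :
    ∃ U > 0, U ^ 3 + 2 * q * U ^ 2 + (q ^ 2 - 4 * s) * U = r ^ 2 := by
  set f : ℝ → ℝ := fun U => U * ((U + q) ^ 2 - 4 * s) - r ^ 2
  set m := 1 + 4 * |s| + r ^ 2
  set K := |q| + m
  have hm : 1 ≤ m := by linarith [abs_nonneg s, sq_nonneg r]
  have hf0 : f 0 < 0 := by simp [f]; positivity
  have hfK : 0 < f K := by
    have hKq : m ≤ K + q := by linarith [neg_abs_le q]
    have h1 : 1 + r ^ 2 ≤ (K + q) ^ 2 - 4 * s := by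
      nlinarith [le_abs_self s, pow_le_pow_left₀ (by linarith) hKq 2]
    nlinarith [abs_nonneg q]
  obtain ⟨U, hU, hfU⟩ := intermediate_value_Ioo (by positivity) (f := f) (by fun_prop)
    ⟨hf0, hfK⟩
  exact ⟨U, hU.1, by simp only [f] at hfU; linear_combination hfU⟩

/-- `(t² + ut + v)(t² − ut + w) = t⁴ + (v + w − u²)t² + u(w − v)t + vw`. -/
theorem exists_depressed_quartic_factorization (q r s : ℝ) :
    ∃ u v w : ℝ, v + w - u ^ 2 = q ∧ u * (w - v) = r ∧ v * w = s := by
  rcases eq_or_ne r 0 with rfl | hr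
  · rcases le_or_gt (4 * s) (q ^ 2) with hqs | hqs
    · have hD := Real.sq_sqrt (sub_nonneg.mpr hqs)
      exact ⟨0, (q - √(q ^ 2 - 4 * s)) / 2, (q + √(q ^ 2 - 4 * s)) / 2, by ring, by ring,
        by linear_combination -hD / 4⟩
    · have hs : 0 ≤ s := by nlinarith [sq_nonneg q]
      have hq : q ≤ 2 * √s := by nlinarith [Real.sq_sqrt hs, Real.sqrt_nonneg s]
      have hu := Real.sq_sqrt (sub_nonneg.mpr hq)
      exact ⟨√(2 * √s - q), √s, √s, by linear_combination -hu, by ring, Real.mul_self_sqrt hs⟩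
  · -- `u²` is a root of the resolvent cubic
    obtain ⟨U, hU, hUr⟩ := exists_pos_resolvent_root q r s hr
    have hu := Real.sq_sqrt hU.le
    have hu0 : √U ≠ 0 := (Real.sqrt_pos.mpr hU).ne'
    refine ⟨√U, (q + U - r / √U) / 2, (q + U + r / √U) / 2, by linear_combination -hu, ?_, ?_⟩
    · field_simp; ring
    · field_simp
      linear_combination hUr + (2 * q * U + q ^ 2 + U ^ 2 - 4 * s) * hu

theorem exists_rotation_diagonalizing (A B C : ℝ) :
    ∃ c s : ℝ, c ^ 2 + s ^ 2 = 1 ∧ 2 * c * s * (C - A) + B * (c ^ 2 - s ^ 2) = 0 := by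
  set g : ℝ → ℝ := fun θ =>
    2 * Real.cos θ * Real.sin θ * (C - A) + B * (Real.cos θ ^ 2 - Real.sin θ ^ 2)
  have hg : 0 ∈ Set.uIcc (g 0) (g (Real.pi / 2)) := by
    simp only [g, Real.cos_zero, Real.sin_zero, Real.cos_pi_div_two, Real.sin_pi_div_two]
    rcases le_total B 0 with hB | hB <;> simp [hB]
  obtain ⟨θ, -, hθ⟩ := intermediate_value_uIcc (by fun_prop) hg
  exact ⟨Real.cos θ, Real.sin θ, Real.cos_sq_add_sin_sq θ, hθ⟩

theorem exists_formEquiv_quadratic_mul_quadratic {a : ℝ} (ha : a ≠ 0) (b c d e : ℝ) :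
    ∃ r v A B C : ℝ, FormEquiv
      (fun u : Fin 2 → ℝ => a * u 0 ^ 4 + b * u 0 ^ 3 * u 1 + c * u 0 ^ 2 * u 1 ^ 2
        + d * u 0 * u 1 ^ 3 + e * u 1 ^ 4)
      (fun u => (u 0 ^ 2 + r * u 0 * u 1 + v * u 1 ^ 2)
        * (A * u 0 ^ 2 + B * u 0 * u 1 + C * u 1 ^ 2)) := by
  obtain ⟨σ, rfl⟩ : ∃ σ, b = 4 * a * σ := ⟨b / (4 * a), by field_simp⟩
  -- the coefficients of the quartic in `(x + σy, y)`, which has no `x³y` term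
  set c' := 6 * a * σ ^ 2 - 3 * (4 * a * σ) * σ + c
  set d' := -4 * a * σ ^ 3 + 3 * (4 * a * σ) * σ ^ 2 - 2 * c * σ + d
  set e' := a * σ ^ 4 - (4 * a * σ) * σ ^ 3 + c * σ ^ 2 - d * σ + e
  obtain ⟨r, v, w, h₁, h₂, h₃⟩ := exists_depressed_quartic_factorization (c' / a) (d' / a) (e' / a)
  replace h₁ : a * (v + w - r ^ 2) = c' := by rw [h₁]; field_simp
  replace h₂ : a * (r * (w - v)) = d' := by rw [h₂]; field_simp
  replace h₃ : a * (v * w) = e' := by rw [h₃]; field_simp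
  refine ⟨r, v, a, -(a * r), a * w, FormEquiv.of_fin_two 1 σ 0 1 (by norm_num) fun u => ?_⟩
  simp only [Matrix.cons_val_zero, Matrix.cons_val_one]
  linear_combination (-((u 0 + σ * u 1) ^ 2 * u 1 ^ 2)) * h₁ - (u 0 + σ * u 1) * u 1 ^ 3 * h₂
    - u 1 ^ 4 * h₃

theorem exists_formEquiv_sum_sq_mul {r v : ℝ} (hrv : r ^ 2 < 4 * v) (A B C : ℝ) :
    ∃ A' B' C' : ℝ, FormEquiv
      (fun u : Fin 2 → ℝ => (u 0 ^ 2 + r * u 0 * u 1 + v * u 1 ^ 2)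
        * (A * u 0 ^ 2 + B * u 0 * u 1 + C * u 1 ^ 2))
      (fun u => (u 0 ^ 2 + u 1 ^ 2) * (A' * u 0 ^ 2 + B' * u 0 * u 1 + C' * u 1 ^ 2)) := by
  obtain ⟨γ, hγ, hγ2⟩ : ∃ γ > 0, γ ^ 2 = v - r ^ 2 / 4 :=
    ⟨√(v - r ^ 2 / 4), Real.sqrt_pos.mpr (by linarith), Real.sq_sqrt (by linarith)⟩
  refine ⟨A, (B - A * r) / γ, (A * r ^ 2 / 4 - B * r / 2 + C) / γ ^ 2,
    FormEquiv.of_fin_two 1 (r / 2) 0 γ (by simpa using hγ.ne') fun u => ?_⟩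
  simp only [Matrix.cons_val_zero, Matrix.cons_val_one]
  field_simp
  linear_combination (-64) * γ ^ 2 * (A * u 0 ^ 2 + B * u 0 * u 1 + C * u 1 ^ 2) * u 1 ^ 2 * hγ2

theorem exists_formEquiv_biquadratic (A B C : ℝ) :
    ∃ α β : ℝ, FormEquiv
      (fun u : Fin 2 → ℝ => (u 0 ^ 2 + u 1 ^ 2) * (A * u 0 ^ 2 + B * u 0 * u 1 + C * u 1 ^ 2))
      (fun u => α * u 0 ^ 4 + (α + β) * u 0 ^ 2 * u 1 ^ 2 + β * u 1 ^ 4) := by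
  obtain ⟨c, s, hcs, hdiag⟩ := exists_rotation_diagonalizing A B C
  set α := A * c ^ 2 + B * c * s + C * s ^ 2
  set β := A * s ^ 2 - B * c * s + C * c ^ 2
  have hrot : ∀ P R : ℝ,
      ((c * P - s * R) ^ 2 + (s * P + c * R) ^ 2) * (A * (c * P - s * R) ^ 2
        + B * (c * P - s * R) * (s * P + c * R) + C * (s * P + c * R) ^ 2)
      = α * P ^ 4 + (α + β) * P ^ 2 * R ^ 2 + β * R ^ 4 := fun P R => by
    linear_combination (P ^ 2 + R ^ 2) * (α * P ^ 2 + β * R ^ 2 + (2 * c * s * (C - A)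
      + B * (c ^ 2 - s ^ 2)) * P * R) * hcs + (P ^ 2 + R ^ 2) * P * R * hdiag
  refine ⟨α, β, FormEquiv.of_fin_two c s (-s) c (by nlinarith) fun u => ?_⟩
  simp only [Matrix.cons_val_zero, Matrix.cons_val_one]
  have hx : c * (c * u 0 + s * u 1) - s * (-s * u 0 + c * u 1) = u 0 := by
    linear_combination u 0 * hcs
  have hy : s * (c * u 0 + s * u 1) + c * (-s * u 0 + c * u 1) = u 1 := by
    linear_combination u 1 * hcs
  rw [← hrot, hx, hy]

theorem exists_formEquiv_fQuartic_of_biquadratic {A C : ℝ} (hA : 0 < A) (hC : 0 < C) (B : ℝ) :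
    ∃ μ, FormEquiv (fun u : Fin 2 → ℝ => A * u 0 ^ 4 + B * u 0 ^ 2 * u 1 ^ 2 + C * u 1 ^ 4)
      (fun u => eval u (fQuartic μ)) := by
  obtain ⟨s, hs, hsA⟩ := exists_pos_pow_four_eq hA
  obtain ⟨t, ht, htC⟩ := exists_pos_pow_four_eq hC
  have hμ : 6 * (B / (6 * (s ^ 2 * t ^ 2))) * (s ^ 2 * t ^ 2) = B := by field_simp
  refine ⟨B / (6 * (s ^ 2 * t ^ 2)),
    FormEquiv.of_fin_two s 0 0 t (by simpa using (mul_pos hs ht).ne') fun u => ?_⟩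
  simp only [eval_fQuartic, Matrix.cons_val_zero, Matrix.cons_val_one]
  linear_combination (-(u 0 ^ 4)) * hsA - u 0 ^ 2 * u 1 ^ 2 * hμ - u 1 ^ 4 * htC

theorem formEquiv_fQuartic_involution {μ : ℝ} (hμ : -(1 / 3) < μ) :
    FormEquiv (fun u => eval u (fQuartic μ))
      (fun u => eval u (fQuartic ((1 - μ) / (1 + 3 * μ)))) := by
  set l := (1 - μ) / (1 + 3 * μ)
  have hl : l * (1 + 3 * μ) = 1 - μ := div_mul_cancel₀ _ (by linarith)
  obtain ⟨κ, hκ, hκ4⟩ := exists_pos_pow_four_eq (show 0 < (1 + 3 * μ) / 8 by linarith)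
  refine FormEquiv.of_fin_two κ κ κ (-κ) (by nlinarith) fun u => ?_
  simp only [eval_fQuartic, Matrix.cons_val_zero, Matrix.cons_val_one]
  linear_combination (-((2 + 6 * l) * (u 0 ^ 4 + u 1 ^ 4) + (12 - 12 * l) * u 0 ^ 2 * u 1 ^ 2))
    * hκ4 + (-(3 / 4) * (u 0 ^ 4 + u 1 ^ 4) + 3 / 2 * u 0 ^ 2 * u 1 ^ 2) * hl

theorem exists_mem_Ioc_formEquiv_fQuartic {μ : ℝ} (hμ : -(1 / 3) < μ) :
    ∃ l ∈ Set.Ioc (-(1 / 3) : ℝ) (1 / 3),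
      FormEquiv (fun u => eval u (fQuartic μ)) (fun u => eval u (fQuartic l)) := by
  rcases le_or_gt μ (1 / 3) with hle | hgt
  · exact ⟨μ, ⟨hμ, hle⟩, FormEquiv.refl _⟩
  · refine ⟨_, ⟨?_, ?_⟩, formEquiv_fQuartic_involution hμ⟩
    · rw [lt_div_iff₀ (by linarith)]; linarith
    · rw [div_le_iff₀ (by linarith)]; linarith

theorem exists_formEquiv_fQuartic_of_pos {a b c d e : ℝ} (hpd : ∀ u : Fin 2 → ℝ, u ≠ 0 →
      0 < a * u 0 ^ 4 + b * u 0 ^ 3 * u 1 + c * u 0 ^ 2 * u 1 ^ 2 + d * u 0 * u 1 ^ 3 + e * u 1 ^ 4) :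
    ∃ l ∈ Set.Ioc (-(1 / 3) : ℝ) (1 / 3), FormEquiv
      (fun u => a * u 0 ^ 4 + b * u 0 ^ 3 * u 1 + c * u 0 ^ 2 * u 1 ^ 2 + d * u 0 * u 1 ^ 3
        + e * u 1 ^ 4)
      (fun u => eval u (fQuartic l)) := by
  have ha : 0 < a := by simpa using hpd ![1, 0] (by simp)
  obtain ⟨r, v, A, B, C, h₁⟩ :=
    exists_formEquiv_quadratic_mul_quadratic ha.ne' b c d e
  have hrv : r ^ 2 < 4 * v := sq_lt_four_mul_of_forall_ne_zero fun t ht =>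
    (h₁.pos_of_pos hpd ![t, 1] (by simp)).ne' (by simp [ht])
  obtain ⟨A', B', C', h₂⟩ := exists_formEquiv_sum_sq_mul hrv A B C
  obtain ⟨α, β, h₃⟩ := exists_formEquiv_biquadratic A' B' C'
  have h₁₂₃ := (h₁.trans h₂).trans h₃
  have hα : 0 < α := by simpa using h₁₂₃.pos_of_pos hpd ![1, 0] (by simp)
  have hβ : 0 < β := by simpa using h₁₂₃.pos_of_pos hpd ![0, 1] (by simp)
  obtain ⟨μ, h₄⟩ := exists_formEquiv_fQuartic_of_biquadratic hα hβ (α + β)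
  have hμ : -(1 / 3) < μ := by
    have := (h₁₂₃.trans h₄).pos_of_pos hpd ![1, 1] (by simp)
    simp [eval_fQuartic] at this
    linarith
  obtain ⟨l, hl, h₅⟩ := exists_mem_Ioc_formEquiv_fQuartic hμ
  exact ⟨l, hl, (h₁₂₃.trans h₄).trans h₅⟩

/-- Every positive definite binary quartic is equivalent to `f_λ` for a unique
`λ ∈ (−1/3, 1/3]` under an invertible linear change of variables. -/
theorem pd_quartic_equiv_fQuartic (p : MvPolynomial (Fin 2) ℝ)
    (hp : p.IsHomogeneous 4)
    (hpd : ∀ u : Fin 2 → ℝ, u ≠ 0 → 0 < eval u p) :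
    ∃ l ∈ Set.Ioc (-(1 / 3) : ℝ) (1 / 3), ∃ M : Matrix (Fin 2) (Fin 2) ℝ,
      IsUnit M ∧ p = compMat (fQuartic l) M := by
  obtain ⟨a, b, c, d, e, hpe⟩ := hp.exists_eval_eq_quartic
  obtain ⟨l, hl, M, hM, hpM⟩ := exists_formEquiv_fQuartic_of_pos fun u hu => hpe u ▸ hpd u hu
  refine ⟨l, hl, M, hM, MvPolynomial.funext fun u => ?_⟩
  rw [eval_compMat]
  exact (hpe u).trans (hpM u)
end
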